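/- arXiv:2104.13851 — 10 statements merged into one kernel-verified Lean document; each statement's English description precedes it below -/
import Mathlib

section
/- Fix a rank-k hypergraph E (∅ ∉ E, E finite, and every e ∈ E is finite with |e| ≤ k). Define invar C F = (F ⊆ E ∧ C is a vertex cover of E − F ∧ C is finite ∧ there exists M with M a matching, M ⊆ E, |C| ≤ k·|M|, and e ∩ f = ∅ for all e ∈ M, f ∈ F). Then for any e ∈ F, if F ≠ ∅ and invar C F holds, then invar (C ∪ e) (F − {e′ ∈ F | e ∩ e′ ≠ ∅}) holds. -/
/-- A vertex cover of a hypergraph `E`: a set of vertices intersecting every edge. -/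
def vc {α : Type*} (E : Set (Set α)) (C : Set α) : Prop := ∀ e ∈ E, e ∩ C ≠ ∅

/-- A matching: a set of pairwise disjoint sets. -/
def matching {α : Type*} (M : Set (Set α)) : Prop :=
  ∀ e ∈ M, ∀ f ∈ M, e ≠ f → e ∩ f = ∅

def inv_matching {α : Type*} (k : ℕ) (E : Set (Set α)) (C : Set α)
    (F M : Set (Set α)) : Prop :=
  matching M ∧ M ⊆ E ∧ C.ncard ≤ k * M.ncard ∧ ∀ e ∈ M, ∀ f ∈ F, e ∩ f = ∅

def invar {α : Type*} (k : ℕ) (E : Set (Set α)) (C : Set α) (F : Set (Set α)) : Prop :=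
  F ⊆ E ∧ vc (E \ F) C ∧ C.Finite ∧ ∃ M, inv_matching k E C F M

/-! The edges removed from `F` are exactly those met by `e`, so `C ∪ e` covers them; `e` is
disjoint from every edge of the old matching `M`, so `insert e M` is again a matching, and it
pays for the at most `k` new vertices (were `e` already in `M`, it would be disjoint from itself,
hence empty, and nothing new is paid for). -/

section

variable {α : Type*}

theorem vc.union_diff_meeting {E F : Set (Set α)} {C : Set α} (hC : vc (E \ F) C)
    (e : Set α) : vc (E \ (F \ {f ∈ F | e ∩ f ≠ ∅})) (C ∪ e) := by
  rintro f ⟨hfE, hf⟩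
  by_cases hfF : f ∈ F
  · have hef : e ∩ f ≠ ∅ := fun h => hf ⟨hfF, fun hm => hm.2 h⟩
    exact fun h => hef (Set.subset_empty_iff.mp fun x hx => h.subset ⟨hx.2, Or.inr hx.1⟩)
  · exact fun h => hC f ⟨hfE, hfF⟩
      (Set.subset_empty_iff.mp fun x hx => h.subset ⟨hx.1, Or.inl hx.2⟩)

theorem matching.insert {M : Set (Set α)} (hM : matching M) {e : Set α}
    (he : ∀ f ∈ M, f ∩ e = ∅) : matching (insert e M) := by
  rintro a (rfl | ha) b (rfl | hb) hab
  · exact absurd rfl hab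
  · rw [Set.inter_comm]; exact he b hb
  · exact he a ha
  · exact hM a ha b hb hab

theorem ncard_union_le_mul_ncard_insert {k : ℕ} {C e : Set α} {M : Set (Set α)}
    (hC : C.ncard ≤ k * M.ncard) (hek : e.ncard ≤ k) (hM : M.Finite)
    (hemp : e ∈ M → e = ∅) : (C ∪ e).ncard ≤ k * (insert e M).ncard := by
  by_cases heM : e ∈ M
  · rw [Set.insert_eq_of_mem heM, hemp heM, Set.union_empty]
    exact hC
  · calc (C ∪ e).ncard ≤ C.ncard + e.ncard := Set.ncard_union_le C e
      _ ≤ k * M.ncard + k := add_le_add hC hek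
      _ = k * (insert e M).ncard := by rw [Set.ncard_insert_of_notMem heM hM]; ring

theorem inv_matching.insert {k : ℕ} {E F M : Set (Set α)} {C e : Set α}
    (h : inv_matching k E C F M) (heF : e ∈ F) (heE : e ∈ E) (hek : e.ncard ≤ k)
    (hMfin : M.Finite) :
    inv_matching k E (C ∪ e) (F \ {f ∈ F | e ∩ f ≠ ∅}) (insert e M) := by
  obtain ⟨hM, hME, hcard, hdisj⟩ := h
  refine ⟨hM.insert fun f hf => hdisj f hf e heF, Set.insert_subset heE hME,
    ncard_union_le_mul_ncard_insert hcard hek hMfin fun heM => by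
      simpa using hdisj e heM e heF, ?_⟩
  rintro a (rfl | ha) f ⟨hfF, hf⟩
  · by_contra hef
    exact hf ⟨hfF, hef⟩
  · exact hdisj a ha f hfF

end

theorem stmt_1_general {α : Type*} (k : ℕ) (E : Set (Set α))
    (hE₂ : E.Finite) (hE₃ : ∀ e ∈ E, e.Finite ∧ e.ncard ≤ k)
    (C : Set α) (F : Set (Set α)) (e : Set α) (heF : e ∈ F)
    (hinv : invar k E C F) :
    invar k E (C ∪ e) (F \ {e' ∈ F | e ∩ e' ≠ ∅}) := by
  obtain ⟨hFE, hvc, hCfin, M, hM⟩ := hinv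
  have heE : e ∈ E := hFE heF
  exact ⟨Set.sdiff_subset.trans hFE, hvc.union_diff_meeting e, hCfin.union (hE₃ e heE).1,
    insert e M, hM.insert heF heE (hE₃ e heE).2 (hE₂.subset hM.2.1)⟩

theorem stmt_1 {α : Type*} (k : ℕ) (E : Set (Set α))
    (hE₁ : ∅ ∉ E) (hE₂ : E.Finite) (hE₃ : ∀ e ∈ E, e.Finite ∧ e.ncard ≤ k)
    (C : Set α) (F : Set (Set α)) (e : Set α) (heF : e ∈ F)
    (hF : F ≠ ∅) (hinv : invar k E C F) :
    invar k E (C ∪ e) (F \ {e' ∈ F | e ∩ e' ≠ ∅}) :=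
  stmt_1_general k E hE₂ hE₃ C F e heF hinv
end

section
/- Fix a rank-k hypergraph E (∅ ∉ E, E finite, and every e ∈ E is finite with |e| ≤ k). Define invar C F = (F ⊆ E ∧ C is a vertex cover of E − F ∧ C is finite ∧ there exists M with M a matching, M ⊆ E, |C| ≤ k·|M|, and e ∩ f = ∅ for all e ∈ M, f ∈ F). If invar C ∅ holds, then C is a vertex cover of E and for every finite vertex cover C′ of E one has |C| ≤ k·|C′|. -/
/-! Any cover must hit the pairwise disjoint edges of a matching in distinct vertices, so a
matching is never larger than a cover; the invariant bounds `|C|` by `k` times such a matching. -/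

theorem vc.anti {α : Type*} {E E' : Set (Set α)} {C : Set α} (h : E' ⊆ E) (hC : vc E C) :
    vc E' C :=
  fun e he => hC e (h he)

theorem matching.ncard_le_ncard_of_vc {α : Type*} {M : Set (Set α)} {C : Set α}
    (hM : matching M) (hC : vc M C) (hfin : C.Finite) : M.ncard ≤ C.ncard := by
  have hpick : ∀ e : M, ∃ x : C, (x : α) ∈ (e : Set α) := fun e => by
    obtain ⟨x, hxe, hxC⟩ := Set.nonempty_iff_ne_empty.mpr (hC e e.2)
    exact ⟨⟨x, hxC⟩, hxe⟩
  choose pick hpick using hpick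
  have hinj : Function.Injective pick := by
    intro e f hef
    by_contra hne
    have hdisj := hM e e.2 f f.2 (Subtype.coe_ne_coe.mpr hne)
    have hmem : (pick e : α) ∈ (e : Set α) ∩ f := ⟨hpick e, hef ▸ hpick f⟩
    simp [hdisj] at hmem
  have := hfin.to_subtype
  rw [← Nat.card_coe_set_eq, ← Nat.card_coe_set_eq]
  exact Nat.card_le_card_of_injective pick hinj

theorem stmt_2_general {α : Type*} (k : ℕ) (E : Set (Set α))
    (C : Set α) (hinv : invar k E C ∅) :
    vc E C ∧ ∀ C' : Set α, C'.Finite → vc E C' → C.ncard ≤ k * C'.ncard := by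
  obtain ⟨-, hcov, -, M, hM, hME, hcard, -⟩ := hinv
  rw [Set.sdiff_empty] at hcov
  exact ⟨hcov, fun C' hfin hC' =>
    hcard.trans (Nat.mul_le_mul_left k (hM.ncard_le_ncard_of_vc (hC'.anti hME) hfin))⟩

theorem stmt_2 {α : Type*} (k : ℕ) (E : Set (Set α))
    (hE₁ : ∅ ∉ E) (hE₂ : E.Finite) (hE₃ : ∀ e ∈ E, e.Finite ∧ e.ncard ≤ k)
    (C : Set α) (hinv : invar k E C ∅) :
    vc E C ∧ ∀ C' : Set α, C'.Finite → vc E C' → C.ncard ≤ k * C'.ncard :=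
  stmt_2_general k E C hinv
end

section
/- Fix a finite graph E whose edges are all 2-element sets, with vertex set V = ⋃E, neighbors x = {y | {x,y} ∈ E}, and maximum degree Δ. Define inv_iv S X = (S is an independent set of E ∧ X ⊆ V ∧ (∀v₁ ∈ V − X, ∀v₂ ∈ S, {v₁,v₂} ∉ E) ∧ S ⊆ X), and inv_partition S X P = (inv_iv S X ∧ ⋃P = X ∧ (∀p ∈ P, ∃s ∈ V, p = {s} ∪ neighbors s) ∧ |P| = |S| ∧ P finite). If inv_partition S V P holds, then every independent set S′ of E satisfies |S′| ≤ |S| · Δ. -/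
/-!
The sets of `P` are closed neighbourhoods `{s} ∪ nbrs E s` covering all vertices, and there are
`|S|` of them. An independent set `S'` meets such a neighbourhood either in `{s}` alone (if
`s ∈ S'`) or inside `nbrs E s`, so in at most `Δ` vertices; here `Δ ≥ 1` because every vertex lies
on an edge and therefore has a neighbour. Summing over `P` gives `|S'| ≤ |S| · Δ`.
-/

/-- The neighbors of a vertex `x` in the graph `E`. -/
def nbrs {α : Type*} (E : Set (Set α)) (x : α) : Set α := {y | {x, y} ∈ E}

/-- The maximum degree of the graph `E`. -/
noncomputable def maxDeg {α : Type*} (E : Set (Set α)) : ℕ :=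
  sSup ((fun v => (nbrs E v).ncard) '' ⋃₀ E)

/-- `S` is an independent set of the graph `E`. -/
def iv {α : Type*} (E : Set (Set α)) (S : Set α) : Prop :=
  S ⊆ ⋃₀ E ∧ ∀ v₁ v₂, v₁ ∈ S → v₂ ∈ S → ({v₁, v₂} : Set α) ∉ E

def inv_iv {α : Type*} (E : Set (Set α)) (S X : Set α) : Prop :=
  iv E S ∧ X ⊆ ⋃₀ E ∧ (∀ v₁ ∈ (⋃₀ E) \ X, ∀ v₂ ∈ S, ({v₁, v₂} : Set α) ∉ E) ∧ S ⊆ X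

def inv_partition {α : Type*} (E : Set (Set α)) (S X : Set α) (P : Set (Set α)) : Prop :=
  inv_iv E S X ∧ ⋃₀ P = X ∧ (∀ p ∈ P, ∃ s ∈ ⋃₀ E, p = {s} ∪ nbrs E s) ∧
    P.ncard = S.ncard ∧ P.Finite

theorem Set.Finite.ncard_le_mul_of_subset_sUnion {α : Type*} {P : Set (Set α)} (hP : P.Finite)
    {S : Set α} (hS : S ⊆ ⋃₀ P) {D : ℕ} (hD : ∀ p ∈ P, (S ∩ p).ncard ≤ D) :
    S.ncard ≤ P.ncard * D := by
  have hcover : S = ⋃ p ∈ hP.toFinset, S ∩ p := by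
    simp only [Set.Finite.mem_toFinset, ← Set.inter_iUnion₂, ← Set.sUnion_eq_biUnion,
      Set.inter_eq_left.mpr hS]
  calc S.ncard = (⋃ p ∈ hP.toFinset, S ∩ p).ncard := congrArg Set.ncard hcover
    _ ≤ ∑ p ∈ hP.toFinset, (S ∩ p).ncard := hP.toFinset.set_ncard_biUnion_le _
    _ ≤ hP.toFinset.card • D :=
        Finset.sum_le_card_nsmul _ _ _ fun p hp => hD p (hP.mem_toFinset.mp hp)
    _ = P.ncard * D := by rw [smul_eq_mul, Set.ncard_eq_toFinset_card P hP]

section Graph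

variable {α : Type*} {E : Set (Set α)}

theorem nbrs_subset_sUnion (s : α) : nbrs E s ⊆ ⋃₀ E :=
  fun y hy => ⟨{s, y}, hy, by simp⟩

theorem finite_sUnion_of_ncard_eq_two (hE : E.Finite) (hE₂ : ∀ e ∈ E, e.ncard = 2) :
    (⋃₀ E).Finite :=
  hE.sUnion fun e he => Set.finite_of_ncard_ne_zero (by simp [hE₂ e he])

theorem nbrs_nonempty_of_ncard_eq_two (hE₂ : ∀ e ∈ E, e.ncard = 2) {s : α} (hs : s ∈ ⋃₀ E) :
    (nbrs E s).Nonempty := by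
  obtain ⟨e, he, hse⟩ := hs
  obtain ⟨x, y, -, rfl⟩ := Set.ncard_eq_two.mp (hE₂ e he)
  rcases hse with rfl | rfl
  · exact ⟨y, he⟩
  · exact ⟨x, show {s, x} ∈ E by rwa [Set.pair_comm]⟩

theorem ncard_nbrs_le_maxDeg (hV : (⋃₀ E).Finite) {s : α} (hs : s ∈ ⋃₀ E) :
    (nbrs E s).ncard ≤ maxDeg E :=
  le_csSup (hV.image _).bddAbove ⟨s, hs, rfl⟩

theorem one_le_maxDeg (hV : (⋃₀ E).Finite) (hE₂ : ∀ e ∈ E, e.ncard = 2) {s : α}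
    (hs : s ∈ ⋃₀ E) : 1 ≤ maxDeg E :=
  calc 1 ≤ (nbrs E s).ncard := (Set.ncard_pos (hV.subset (nbrs_subset_sUnion s))).mpr
        (nbrs_nonempty_of_ncard_eq_two hE₂ hs)
    _ ≤ maxDeg E := ncard_nbrs_le_maxDeg hV hs

theorem iv.ncard_inter_closedNbhd_le_maxDeg (hV : (⋃₀ E).Finite) (hE₂ : ∀ e ∈ E, e.ncard = 2)
    {S : Set α} (hS : iv E S) {s : α} (hs : s ∈ ⋃₀ E) :
    (S ∩ ({s} ∪ nbrs E s)).ncard ≤ maxDeg E := by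
  by_cases hsS : s ∈ S
  · have hsub : S ∩ ({s} ∪ nbrs E s) ⊆ {s} := by
      rintro z ⟨hzS, hz | hz⟩
      · exact hz
      · exact absurd hz (hS.2 s z hsS hzS)
    calc (S ∩ ({s} ∪ nbrs E s)).ncard ≤ ({s} : Set α).ncard :=
          Set.ncard_le_ncard hsub (Set.finite_singleton s)
      _ = 1 := Set.ncard_singleton s
      _ ≤ maxDeg E := one_le_maxDeg hV hE₂ hs
  · have hsub : S ∩ ({s} ∪ nbrs E s) ⊆ nbrs E s := by
      rintro z ⟨hzS, rfl | hz⟩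
      · exact absurd hzS hsS
      · exact hz
    exact (Set.ncard_le_ncard hsub (hV.subset (nbrs_subset_sUnion s))).trans
      (ncard_nbrs_le_maxDeg hV hs)

end Graph

theorem stmt_4 {α : Type*} (E : Set (Set α))
    (hE : E.Finite) (hE₂ : ∀ e ∈ E, e.ncard = 2)
    (S : Set α) (P : Set (Set α))
    (h : inv_partition E S (⋃₀ E) P) :
    ∀ S' : Set α, iv E S' → S'.ncard ≤ S.ncard * maxDeg E := by
  intro S' hS'
  obtain ⟨-, hcover, hshape, hcard, hPfin⟩ := h
  have hV := finite_sUnion_of_ncard_eq_two hE hE₂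
  rw [← hcard]
  refine hPfin.ncard_le_mul_of_subset_sUnion (hcover ▸ hS'.1) fun p hp => ?_
  obtain ⟨s, hs, rfl⟩ := hshape p hp
  exact hS'.ncard_inter_closedNbhd_le_maxDeg hV hE₂ hs
end

section
/- Fix m > 0 machines, n jobs, and job loads t : ℕ → ℕ. If lb T A j holds and x ∈ {1..m}, then lb (T with T x updated to T x + t (j+1)) (A with A x updated to A x ∪ {j+1}) (j+1) holds. -/
/-- `lb m t T A j`: `(T, A)` is a partial solution distributing jobs `{1..j}`
on machines `{1..m}`, with `T x` the total load on machine `x`. -/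
def lb (m : ℕ) (t : ℕ → ℕ) (T : ℕ → ℕ) (A : ℕ → Finset ℕ) (j : ℕ) : Prop :=
  (∀ x ∈ Finset.Icc 1 m, ∀ y ∈ Finset.Icc 1 m, x ≠ y → A x ∩ A y = ∅) ∧
  (Finset.Icc 1 m).biUnion A = Finset.Icc 1 j ∧
  (∀ x ∈ Finset.Icc 1 m, ∑ y ∈ A x, t y = T x)

namespace Finset

open Function

variable {ι α M : Type*} [DecidableEq α] [AddCommMonoid M]
  {s : Finset ι} {A : ι → Finset α} {a : α} {x : ι}

theorem notMem_of_notMem_biUnion (ha : a ∉ s.biUnion A) {y : ι} (hy : y ∈ s) : a ∉ A y :=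
  fun hay => ha (mem_biUnion.2 ⟨y, hy, hay⟩)

variable [DecidableEq ι]

theorem inter_update_insert_eq_empty (ha : a ∉ s.biUnion A)
    (hdisj : ∀ y ∈ s, ∀ z ∈ s, y ≠ z → A y ∩ A z = ∅) :
    ∀ y ∈ s, ∀ z ∈ s, y ≠ z →
      update A x (insert a (A x)) y ∩ update A x (insert a (A x)) z = ∅ := by
  intro y hy z hz hyz
  rcases eq_or_ne y x with rfl | hyx
  · rw [update_self, update_of_ne hyz.symm,
      insert_inter_of_notMem (notMem_of_notMem_biUnion ha hz)]
    exact hdisj y hy z hz hyz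
  rw [update_of_ne hyx]
  rcases eq_or_ne z x with rfl | hzx
  · rw [update_self, inter_insert_of_notMem (notMem_of_notMem_biUnion ha hy)]
    exact hdisj y hy z hz hyz
  rw [update_of_ne hzx]
  exact hdisj y hy z hz hyz

theorem biUnion_update_insert (hx : x ∈ s) :
    s.biUnion (update A x (insert a (A x))) = insert a (s.biUnion A) := by
  rw [← insert_erase hx, biUnion_insert, biUnion_insert, update_self, insert_union,
    biUnion_congr rfl fun y hy => update_of_ne (ne_of_mem_erase hy) _ _]

theorem sum_update_insert {t : α → M} {T : ι → M} (ha : a ∉ s.biUnion A)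
    (hsum : ∀ y ∈ s, ∑ b ∈ A y, t b = T y) :
    ∀ y ∈ s, ∑ b ∈ update A x (insert a (A x)) y, t b = update T x (T x + t a) y := by
  intro y hy
  rcases eq_or_ne y x with rfl | hyx
  · rw [update_self, update_self, sum_insert (notMem_of_notMem_biUnion ha hy), hsum y hy,
      add_comm]
  · rw [update_of_ne hyx, update_of_ne hyx, hsum y hy]

end Finset

theorem stmt_6_general (m : ℕ) (t : ℕ → ℕ)
    (T : ℕ → ℕ) (A : ℕ → Finset ℕ) (j : ℕ) (hlb : lb m t T A j)
    (x : ℕ) (hx : x ∈ Finset.Icc 1 m) :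
    lb m t (Function.update T x (T x + t (j + 1)))
      (Function.update A x (insert (j + 1) (A x))) (j + 1) := by
  obtain ⟨hdisj, hunion, hsum⟩ := hlb
  have hfresh : j + 1 ∉ (Finset.Icc 1 m).biUnion A := by simp [hunion]
  refine ⟨Finset.inter_update_insert_eq_empty hfresh hdisj, ?_,
    Finset.sum_update_insert hfresh hsum⟩
  rw [Finset.biUnion_update_insert hx, hunion,
    Finset.insert_Icc_right_eq_Icc_add_one (by omega)]

theorem stmt_6 (m n : ℕ) (hm : 0 < m) (t : ℕ → ℕ)
    (T : ℕ → ℕ) (A : ℕ → Finset ℕ) (j : ℕ) (hlb : lb m t T A j)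
    (x : ℕ) (hx : x ∈ Finset.Icc 1 m) :
    lb m t (Function.update T x (T x + t (j + 1)))
      (Function.update A x (insert (j + 1) (A x))) (j + 1) :=
  stmt_6_general m t T A j hlb x hx
end

section
/- Fix m > 0 machines, n jobs, and job loads t : ℕ → ℕ. If lb T A j holds, then (∑_{x=1}^{j} t x) / m ≤ makespan T (as real numbers). -/
/-- The makespan: the maximum load over the machines `{1..m}`. -/
def makespan (m : ℕ) (T : ℕ → ℕ) : ℕ := (Finset.Icc 1 m).sup T

theorem lb.sum_loads_eq {m j : ℕ} {t T : ℕ → ℕ} {A : ℕ → Finset ℕ} (h : lb m t T A j) :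
    ∑ x ∈ Finset.Icc 1 m, T x = ∑ y ∈ Finset.Icc 1 j, t y := by
  obtain ⟨hdisj, hcover, hload⟩ := h
  have hpair : (Finset.Icc 1 m : Set ℕ).PairwiseDisjoint A := fun x hx y hy hxy =>
    Finset.disjoint_iff_inter_eq_empty.mpr (hdisj x hx y hy hxy)
  rw [← hcover, Finset.sum_biUnion hpair]
  exact (Finset.sum_congr rfl hload).symm

theorem sum_le_mul_makespan (m : ℕ) (T : ℕ → ℕ) :
    ∑ x ∈ Finset.Icc 1 m, T x ≤ m * makespan m T := by
  simpa [makespan] using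
    Finset.sum_le_card_nsmul (Finset.Icc 1 m) T _ fun x hx => Finset.le_sup (f := T) hx

theorem stmt_7_general (m : ℕ) (t : ℕ → ℕ)
    (T : ℕ → ℕ) (A : ℕ → Finset ℕ) (j : ℕ) (hlb : lb m t T A j) :
    ((∑ x ∈ Finset.Icc 1 j, t x : ℕ) : ℝ) / (m : ℝ) ≤ (makespan m T : ℝ) := by
  have htotal : ∑ x ∈ Finset.Icc 1 j, t x ≤ makespan m T * m := by
    rw [← hlb.sum_loads_eq, mul_comm]
    exact sum_le_mul_makespan m T
  exact div_le_of_le_mul₀ m.cast_nonneg (makespan m T).cast_nonneg (by exact_mod_cast htotal)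

theorem stmt_7 (m n : ℕ) (hm : 0 < m) (t : ℕ → ℕ)
    (T : ℕ → ℕ) (A : ℕ → Finset ℕ) (j : ℕ) (hlb : lb m t T A j) :
    ((∑ x ∈ Finset.Icc 1 j, t x : ℕ) : ℝ) / (m : ℝ) ≤ (makespan m T : ℝ) :=
  stmt_7_general m t T A j hlb
end

section
/- Fix m > 0 machines, n jobs, and job loads t : ℕ → ℕ. If lb T A j holds, then Max₀ (t '' {1..j}) ≤ makespan T, where Max₀ denotes the maximum of a finite set of naturals, taken to be 0 for the empty set. -/
theorem Finset.sup_biUnion_le_sup_sum {ι α M : Type*} [DecidableEq α] [AddCommMonoid M]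
    [SemilatticeSup M] [OrderBot M] [CanonicallyOrderedAdd M] [IsOrderedAddMonoid M]
    (s : Finset ι) (A : ι → Finset α) (t : α → M) :
    (s.biUnion A).sup t ≤ s.sup fun x => ∑ y ∈ A x, t y :=
  Finset.sup_le fun y hy => by
    obtain ⟨x, hx, hyx⟩ := Finset.mem_biUnion.mp hy
    calc t y ≤ ∑ z ∈ A x, t z := Finset.single_le_sum (fun _ _ => zero_le) hyx
      _ ≤ s.sup fun x => ∑ y ∈ A x, t y := Finset.le_sup (f := fun x => ∑ y ∈ A x, t y) hx

theorem stmt_8_general (m : ℕ) (t : ℕ → ℕ)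
    (T : ℕ → ℕ) (A : ℕ → Finset ℕ) (j : ℕ) (hlb : lb m t T A j) :
    ((Finset.Icc 1 j).image t).sup id ≤ makespan m T := by
  obtain ⟨-, hunion, hsum⟩ := hlb
  rw [Finset.sup_image, Function.id_comp, ← hunion, makespan,
    ← Finset.sup_congr rfl hsum]
  exact Finset.sup_biUnion_le_sup_sum _ A t

theorem stmt_8 (m n : ℕ) (hm : 0 < m) (t : ℕ → ℕ)
    (T : ℕ → ℕ) (A : ℕ → Finset ℕ) (j : ℕ) (hlb : lb m t T A j) :
    ((Finset.Icc 1 j).image t).sup id ≤ makespan m T :=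
  stmt_8_general m t T A j hlb
end

section
/- Fix m > 0 machines, n jobs, and job loads t : ℕ → ℕ. If lb T A j holds, m < j, and sorted j holds (i.e., t x ≤ t y for all x ∈ {1..j} and y ∈ {1..x}), then 2 · t j ≤ makespan T. -/
/-- The job loads `t` are sorted in descending order up to job `j`. -/
def sorted (t : ℕ → ℕ) (j : ℕ) : Prop :=
  ∀ x ∈ Finset.Icc 1 j, ∀ y ∈ Finset.Icc 1 x, t x ≤ t y

/-! More jobs than machines forces, by pigeonhole, two of the jobs `{1..j}` onto one machine;
by sortedness each of them has load at least `t j`. -/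

theorem Finset.exists_one_lt_card_of_card_lt_card_biUnion {ι α : Type*} [DecidableEq α]
    {s : Finset ι} {A : ι → Finset α} (h : s.card < (s.biUnion A).card) :
    ∃ x ∈ s, 1 < (A x).card := by
  by_contra! hle
  have : (s.biUnion A).card ≤ s.card :=
    calc (s.biUnion A).card ≤ ∑ x ∈ s, (A x).card := Finset.card_biUnion_le
      _ ≤ ∑ _x ∈ s, 1 := Finset.sum_le_sum hle
      _ = s.card := Finset.card_eq_sum_ones s |>.symm
  omega

theorem sorted.le_of_mem_Icc {t : ℕ → ℕ} {j y : ℕ} (h : sorted t j)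
    (hy : y ∈ Finset.Icc 1 j) : t j ≤ t y :=
  h j (Finset.right_mem_Icc.2 ((Finset.mem_Icc.1 hy).1.trans (Finset.mem_Icc.1 hy).2)) y hy

theorem stmt_9_general (m : ℕ) (t : ℕ → ℕ)
    (T : ℕ → ℕ) (A : ℕ → Finset ℕ) (j : ℕ) (hlb : lb m t T A j)
    (hmj : m < j) (hsorted : sorted t j) :
    2 * t j ≤ makespan m T := by
  obtain ⟨-, hcover, hsum⟩ := hlb
  obtain ⟨x, hx, hcard⟩ : ∃ x ∈ Finset.Icc 1 m, 1 < (A x).card :=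
    Finset.exists_one_lt_card_of_card_lt_card_biUnion (by simpa [hcover] using hmj)
  have hload : ∀ y ∈ A x, t j ≤ t y := fun y hy =>
    hsorted.le_of_mem_Icc (hcover ▸ Finset.mem_biUnion.2 ⟨x, hx, hy⟩)
  calc 2 * t j ≤ (A x).card * t j := Nat.mul_le_mul_right _ hcard
    _ ≤ ∑ y ∈ A x, t y := by simpa using Finset.card_nsmul_le_sum (A x) t (t j) hload
    _ = T x := hsum x hx
    _ ≤ makespan m T := Finset.le_sup hx

theorem stmt_9 (m n : ℕ) (hm : 0 < m) (t : ℕ → ℕ)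
    (T : ℕ → ℕ) (A : ℕ → Finset ℕ) (j : ℕ) (hlb : lb m t T A j)
    (hmj : m < j) (hsorted : sorted t j) :
    2 * t j ≤ makespan m T :=
  stmt_9_general m t T A j hlb hmj hsorted
end

section
/- Let S be a finite nonempty set of sites in a metric space, and for a finite nonempty set of centers C′ define radius C′ = Max {distance C′ s | s ∈ S} where distance C′ s = Min {dist s c | c ∈ C′}. Let C be a finite set with |C| > n and C ⊆ S such that dist c₁ c₂ > 2r for all distinct c₁, c₂ ∈ C. Then every finite set C′ with 0 < |C′| ≤ n satisfies radius C′ > r. -/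
/-!
By pigeonhole, two distinct points `c₁ ≠ c₂` of `C` share a nearest center `c'`, since `C'` has
fewer points than `C`. Then `2 * r < dist c₁ c₂ ≤ dist c₁ c' + dist c₂ c' ≤ 2 * radius S C'`.
-/

/-- The distance from a point `s` to the nearest center in `C`
(the minimum of `dist s c` over `c ∈ C`, for `C` finite and nonempty). -/
noncomputable def distanceTo {α : Type*} [MetricSpace α] (C : Set α) (s : α) : ℝ :=
  sInf ((fun c => dist s c) '' C)

/-- The radius of a set of centers `C'` w.r.t. the sites `S`
(the maximum over `s ∈ S` of the distance from `s` to `C'`). -/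
noncomputable def radius {α : Type*} [MetricSpace α] (S C' : Set α) : ℝ :=
  sSup ((fun s => distanceTo C' s) '' S)

section

variable {α : Type*} [MetricSpace α]

theorem exists_mem_dist_eq_distanceTo {C : Set α} (hC : C.Finite) (hCne : C.Nonempty) (s : α) :
    ∃ c ∈ C, dist s c = distanceTo C s :=
  (hCne.image _).csInf_mem (hC.image _)

theorem distanceTo_le_radius {S : Set α} (hS : S.Finite) (C : Set α) {s : α} (hs : s ∈ S) :
    distanceTo C s ≤ radius S C :=
  le_csSup (hS.image _).bddAbove (Set.mem_image_of_mem _ hs)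

theorem exists_ne_dist_le_two_mul_radius {S C C' : Set α} (hS : S.Finite) (hCS : C ⊆ S)
    (hC' : C'.Finite) (hC'ne : C'.Nonempty) (hcard : C'.ncard < C.ncard) :
    ∃ c₁ ∈ C, ∃ c₂ ∈ C, c₁ ≠ c₂ ∧ dist c₁ c₂ ≤ 2 * radius S C' := by
  choose nearest hnearest_mem hnearest_dist using exists_mem_dist_eq_distanceTo hC' hC'ne
  obtain ⟨c₁, hc₁, c₂, hc₂, hne, hshared⟩ :=
    Set.exists_ne_map_eq_of_ncard_lt_of_maps_to hcard (fun c _ => hnearest_mem c) hC'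
  refine ⟨c₁, hc₁, c₂, hc₂, hne, ?_⟩
  calc dist c₁ c₂ ≤ dist c₁ (nearest c₁) + dist c₂ (nearest c₂) := by
        rw [hshared]; exact dist_triangle_right _ _ _
    _ = distanceTo C' c₁ + distanceTo C' c₂ := by rw [hnearest_dist, hnearest_dist]
    _ ≤ 2 * radius S C' := by
        linarith [distanceTo_le_radius hS C' (hCS hc₁), distanceTo_le_radius hS C' (hCS hc₂)]

end

theorem stmt_14_general {α : Type*} [MetricSpace α] (S : Set α)
    (hSfin : S.Finite)
    (C : Set α) (n : ℕ) (r : ℝ)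
    (hCcard : n < C.ncard) (hCS : C ⊆ S)
    (hsep : ∀ c₁ ∈ C, ∀ c₂ ∈ C, c₁ ≠ c₂ → 2 * r < dist c₁ c₂) :
    ∀ C' : Set α, C'.Finite → 0 < C'.ncard → C'.ncard ≤ n → r < radius S C' := by
  intro C' hC'fin hC'pos hC'le
  obtain ⟨c₁, hc₁, c₂, hc₂, hne, hle⟩ :=
    exists_ne_dist_le_two_mul_radius hSfin hCS hC'fin
      (Set.nonempty_of_ncard_ne_zero hC'pos.ne') (hC'le.trans_lt hCcard)
  linarith [hsep c₁ hc₁ c₂ hc₂ hne]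

theorem stmt_14 {α : Type*} [MetricSpace α] (S : Set α)
    (hSfin : S.Finite) (hSne : S.Nonempty)
    (C : Set α) (n : ℕ) (r : ℝ)
    (hCfin : C.Finite) (hCcard : n < C.ncard) (hCS : C ⊆ S)
    (hsep : ∀ c₁ ∈ C, ∀ c₂ ∈ C, c₁ ≠ c₂ → 2 * r < dist c₁ c₂) :
    ∀ C' : Set α, C'.Finite → 0 < C'.ncard → C'.ncard ≤ n → r < radius S C' :=
  stmt_14_general S hSfin C n r hCcard hCS hsep
end

section
/- Let U be a finite set with U = ⋃_{i ∈ {1..m}} S i, where S : ℕ → set of elements and w : ℕ → ℝ assigns a weight w i ≥ 0 to each index. Suppose sc C U holds (C ⊆ {1..m} and ⋃_{i ∈ C} S i = U), and there exists a cost function c with: W C = ∑_{s ∈ U} c s, c s ≥ 0 for all s, and ∑_{s ∈ S k} c s ≤ H(|S k|) · w k for every k ∈ {1..m}. Then for every C′ with sc C′ U, W C ≤ H(d*) · W C′, where d* = max over k ∈ {1..m} of |S k| and H is the harmonic number function. -/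
/-!
Charging argument: the weight of `C` is spread over the elements of `U` as the cost `c`. Any other
cover `C'` counts every element at least once, so the total cost is at most the sum over `k ∈ C'` of
the cost of `S k`, which is at most `H (S k).card * w k ≤ H d* * w k`.
-/

/-- `sc m S C U`: `C` is a set cover of `U` using subsets indexed by `{1..m}`. -/
def sc {α : Type*} [DecidableEq α] (m : ℕ) (S : ℕ → Finset α) (C : Finset ℕ)
    (U : Finset α) : Prop :=
  C ⊆ Finset.Icc 1 m ∧ C.biUnion S = U

/-- The `n`-th harmonic number. -/
noncomputable def H (n : ℕ) : ℝ := ∑ j ∈ Finset.Icc 1 n, (1 : ℝ) / j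

open Finset

theorem H_monotone : Monotone H := fun _ _ hab =>
  sum_le_sum_of_subset_of_nonneg (Icc_subset_Icc_right hab) fun _ _ _ => by positivity

theorem Finset.sum_biUnion_le_sum_sum {ι α M : Type*} [DecidableEq α] [AddCommMonoid M]
    [Preorder M] [AddLeftMono M] {s : Finset ι} {t : ι → Finset α} {f : α → M}
    (hf : ∀ x ∈ s.biUnion t, 0 ≤ f x) :
    ∑ x ∈ s.biUnion t, f x ≤ ∑ i ∈ s, ∑ x ∈ t i, f x := by
  have himage : (s.sigma t).image Sigma.snd = s.biUnion t := by
    ext x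
    simp
  rw [← himage]
  exact (sum_image_le_of_nonneg (by rwa [himage])).trans_eq (sum_sigma s t (f ∘ Sigma.snd))

theorem stmt_17_general {α : Type*} [DecidableEq α]
    (m : ℕ) (U : Finset α) (S : ℕ → Finset α) (w : ℕ → ℝ)
    (hw : ∀ i ∈ Finset.Icc 1 m, 0 ≤ w i)
    (C : Finset ℕ)
    (c : α → ℝ)
    (hc₁ : ∑ i ∈ C, w i = ∑ s ∈ U, c s)
    (hc₂ : ∀ s, 0 ≤ c s)
    (hc₃ : ∀ k ∈ Finset.Icc 1 m, ∑ s ∈ S k, c s ≤ H (S k).card * w k) :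
    ∀ C' : Finset ℕ, sc m S C' U →
      ∑ i ∈ C, w i ≤ H ((Finset.Icc 1 m).sup fun k => (S k).card) * ∑ i ∈ C', w i := by
  rintro C' ⟨hC'_sub, hC'_cover⟩
  set d := (Icc 1 m).sup fun k => (S k).card
  have hcharge (k : ℕ) (hk : k ∈ C') : ∑ s ∈ S k, c s ≤ H d * w k :=
    (hc₃ k (hC'_sub hk)).trans <| mul_le_mul_of_nonneg_right
      (H_monotone (le_sup (f := fun k => (S k).card) (hC'_sub hk))) (hw k (hC'_sub hk))
  calc ∑ i ∈ C, w i = ∑ s ∈ C'.biUnion S, c s := by rw [hc₁, hC'_cover]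
    _ ≤ ∑ k ∈ C', ∑ s ∈ S k, c s := sum_biUnion_le_sum_sum fun s _ => hc₂ s
    _ ≤ ∑ k ∈ C', H d * w k := sum_le_sum hcharge
    _ = H d * ∑ i ∈ C', w i := (mul_sum _ _ _).symm

theorem stmt_17 {α : Type*} [DecidableEq α]
    (m : ℕ) (U : Finset α) (S : ℕ → Finset α) (w : ℕ → ℝ)
    (hU : (Finset.Icc 1 m).biUnion S = U)
    (hw : ∀ i ∈ Finset.Icc 1 m, 0 ≤ w i)
    (C : Finset ℕ) (hC : sc m S C U)
    (c : α → ℝ)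
    (hc₁ : ∑ i ∈ C, w i = ∑ s ∈ U, c s)
    (hc₂ : ∀ s, 0 ≤ c s)
    (hc₃ : ∀ k ∈ Finset.Icc 1 m, ∑ s ∈ S k, c s ≤ H (S k).card * w k) :
    ∀ C' : Finset ℕ, sc m S C' U →
      ∑ i ∈ C, w i ≤ H ((Finset.Icc 1 m).sup fun k => (S k).card) * ∑ i ∈ C', w i :=
  stmt_17_general m U S w hw C c hc₁ hc₂ hc₃
end

section
/- Let U be a finite nonempty set of objects with weights w : α → ℝ satisfying 0 < w u ≤ c for all u ∈ U, where c > 0 is the bin capacity, and let P be a bin packing of U (P is a partition of U with ∑_{u ∈ B} w u ≤ c for every B ∈ P). Let P₁ be a finite set of pairwise disjoint nonempty subsets of U, let V′ ⊆ U with V′ ∩ ⋃P₁ = ∅, and let f be a bijection from P₁ onto V′ such that c < W B + w (f B) for every B ∈ P₁, where W B = ∑_{u ∈ B} w u. Then |P₁| + 1 ≤ |P|. -/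
/-!
Every bin of `P` weighs at most `c`, so `∑_U w ≤ c |P|`. Conversely, the sets `B ∪ {f B}`,
`B ∈ P₁`, are pairwise disjoint subsets of `U` each weighing more than `c`, so
`c |P₁| < ∑_U w` as soon as `P₁ ≠ ∅`. Hence `|P₁| < |P|`; when `P₁ = ∅` it suffices that
`P` is nonempty, which holds because it covers `U ≠ ∅`.
-/

/-- `bp U w c P`: `P` is a bin packing of `U`, i.e. a partition of `U`
into bins each of weight at most `c`. -/
def bp {α : Type*} [DecidableEq α] (U : Finset α) (w : α → ℝ) (c : ℝ)
    (P : Finset (Finset α)) : Prop :=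
  P.biUnion id = U ∧ ∅ ∉ P ∧
    (∀ B₁ ∈ P, ∀ B₂ ∈ P, B₁ ≠ B₂ → B₁ ∩ B₂ = ∅) ∧
    (∀ B ∈ P, ∑ u ∈ B, w u ≤ c)

open Finset

section

variable {α : Type*} [DecidableEq α]

theorem Finset.pairwiseDisjoint_id_of_inter_eq_empty {P : Finset (Finset α)}
    (h : ∀ B₁ ∈ P, ∀ B₂ ∈ P, B₁ ≠ B₂ → B₁ ∩ B₂ = ∅) :
    (P : Set (Finset α)).PairwiseDisjoint id :=
  fun B₁ h₁ B₂ h₂ hne => disjoint_iff_inter_eq_empty.2 (h B₁ h₁ B₂ h₂ hne)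

theorem Finset.sum_biUnion_le_mul_card {P : Finset (Finset α)} {w : α → ℝ} {c : ℝ}
    (hdisj : (P : Set (Finset α)).PairwiseDisjoint id) (hle : ∀ B ∈ P, ∑ u ∈ B, w u ≤ c) :
    ∑ u ∈ P.biUnion id, w u ≤ c * P.card := by
  rw [sum_biUnion hdisj, mul_comm, ← nsmul_eq_mul]
  exact sum_le_card_nsmul P _ c hle

theorem Finset.mul_card_lt_sum_biUnion_union {P : Finset (Finset α)} {V : Finset α}
    {w : α → ℝ} {c : ℝ} {f : Finset α → α} (hne : P.Nonempty)
    (hdisj : (P : Set (Finset α)).PairwiseDisjoint id) (hV : Disjoint (P.biUnion id) V)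
    (hf : Set.BijOn f P V) (hover : ∀ B ∈ P, c < ∑ u ∈ B, w u + w (f B)) :
    c * P.card < ∑ u ∈ P.biUnion id ∪ V, w u := by
  have hsumV : ∑ B ∈ P, w (f B) = ∑ u ∈ V, w u :=
    sum_nbij f (fun _ hB => hf.mapsTo hB) hf.injOn hf.surjOn fun _ _ => rfl
  calc c * P.card = ∑ _B ∈ P, c := by rw [sum_const, nsmul_eq_mul, mul_comm]
    _ < ∑ B ∈ P, (∑ u ∈ B, w u + w (f B)) := sum_lt_sum_of_nonempty hne hover
    _ = ∑ u ∈ P.biUnion id ∪ V, w u := by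
      rw [sum_add_distrib, hsumV, sum_union hV, sum_biUnion hdisj]; rfl

namespace bp

variable {U : Finset α} {w : α → ℝ} {c : ℝ} {P : Finset (Finset α)}

theorem sum_le_mul_card (hP : bp U w c P) : ∑ u ∈ U, w u ≤ c * P.card :=
  hP.1 ▸ sum_biUnion_le_mul_card (pairwiseDisjoint_id_of_inter_eq_empty hP.2.2.1) hP.2.2.2

theorem nonempty (hP : bp U w c P) (hU : U.Nonempty) : P.Nonempty :=
  let ⟨B, hB, _⟩ := biUnion_nonempty.1 (hP.1 ▸ hU)
  ⟨B, hB⟩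

end bp

end

theorem stmt_19_general {α : Type*} [DecidableEq α]
    (U : Finset α) (hU : U.Nonempty) (w : α → ℝ) (c : ℝ) (hc : 0 < c)
    (hw : ∀ u ∈ U, 0 < w u ∧ w u ≤ c)
    (P : Finset (Finset α)) (hP : bp U w c P)
    (P₁ : Finset (Finset α))
    (hP₁U : ∀ B ∈ P₁, B ⊆ U)
    (hP₁disj : ∀ B₁ ∈ P₁, ∀ B₂ ∈ P₁, B₁ ≠ B₂ → B₁ ∩ B₂ = ∅)
    (V' : Finset α) (hV'U : V' ⊆ U) (hV'disj : V' ∩ P₁.biUnion id = ∅)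
    (f : Finset α → α) (hf : Set.BijOn f (↑P₁ : Set (Finset α)) (↑V' : Set α))
    (hover : ∀ B ∈ P₁, c < (∑ u ∈ B, w u) + w (f B)) :
    P₁.card + 1 ≤ P.card := by
  rcases P₁.eq_empty_or_nonempty with rfl | hP₁
  · simpa using (hP.nonempty hU).card_pos
  have hsub : P₁.biUnion id ∪ V' ⊆ U := union_subset (biUnion_subset.2 hP₁U) hV'U
  have hlt : c * P₁.card < c * P.card :=
    calc c * P₁.card < ∑ u ∈ P₁.biUnion id ∪ V', w u :=
          mul_card_lt_sum_biUnion_union hP₁ (pairwiseDisjoint_id_of_inter_eq_empty hP₁disj)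
            (disjoint_comm.1 (disjoint_iff_inter_eq_empty.2 hV'disj)) hf hover
      _ ≤ ∑ u ∈ U, w u := sum_le_sum_of_subset_of_nonneg hsub fun u hu _ => (hw u hu).1.le
      _ ≤ c * P.card := hP.sum_le_mul_card
  exact_mod_cast lt_of_mul_lt_mul_left hlt hc.le

theorem stmt_19 {α : Type*} [DecidableEq α]
    (U : Finset α) (hU : U.Nonempty) (w : α → ℝ) (c : ℝ) (hc : 0 < c)
    (hw : ∀ u ∈ U, 0 < w u ∧ w u ≤ c)
    (P : Finset (Finset α)) (hP : bp U w c P)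
    (P₁ : Finset (Finset α))
    (hP₁ne : ∀ B ∈ P₁, B.Nonempty)
    (hP₁U : ∀ B ∈ P₁, B ⊆ U)
    (hP₁disj : ∀ B₁ ∈ P₁, ∀ B₂ ∈ P₁, B₁ ≠ B₂ → B₁ ∩ B₂ = ∅)
    (V' : Finset α) (hV'U : V' ⊆ U) (hV'disj : V' ∩ P₁.biUnion id = ∅)
    (f : Finset α → α) (hf : Set.BijOn f (↑P₁ : Set (Finset α)) (↑V' : Set α))
    (hover : ∀ B ∈ P₁, c < (∑ u ∈ B, w u) + w (f B)) :
    P₁.card + 1 ≤ P.card :=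
  stmt_19_general U hU w c hc hw P hP P₁ hP₁U hP₁disj V' hV'U hV'disj f hf hover
end
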